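/- arXiv:1308.1732 — 3 statements merged into one kernel-verified Lean document; each statement's English description precedes it below -/
import Mathlib

section
/- Let R be a commutative ring, d : R → R a derivation, M the free R-module with basis e₁, e₂, and D : M → M an additive map satisfying the Leibniz rule D(f·m) = d(f)·m + f·D(m) for all f ∈ R, m ∈ M, such that D(e₁) = ∂₀·e₁ + e₂ and D(e₂) = λ·e₁ − ∂₀·e₂ for given ∂₀, λ ∈ R. For α ∈ R set e₂′ := e₂ − α·e₁. Then D(e₁) = (∂₀ + α)·e₁ + e₂′ and D(e₂′) = (λ − α² − (d(α) + 2·∂₀·α))·e₁ − (∂₀ + α)·e₂′. -/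
/-- Coordinate form of the change-of-splitting lemma: if `D e₁ = ∂₀·e₁ + e₂` and
`D e₂ = λ·e₁ − ∂₀·e₂`, then with `e₂′ = e₂ − α·e₁` one has
`D e₁ = (∂₀+α)·e₁ + e₂′` and `D e₂′ = (λ − α² − (d α + 2∂₀α))·e₁ − (∂₀+α)·e₂′`. -/
theorem change_of_splitting {R M : Type*} [CommRing R] [AddCommGroup M] [Module R M]
    (d : Derivation ℤ R R) (b : Module.Basis (Fin 2) R M)
    (D : M →+ M) (hLeib : ∀ (f : R) (m : M), D (f • m) = d f • m + f • D m)
    (dz lam α : R)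
    (h1 : D (b 0) = dz • b 0 + b 1)
    (h2 : D (b 1) = lam • b 0 - dz • b 1) :
    D (b 0) = (dz + α) • b 0 + (b 1 - α • b 0) ∧
      D (b 1 - α • b 0) =
        (lam - α ^ 2 - (d α + 2 * dz * α)) • b 0 - (dz + α) • (b 1 - α • b 0) := by
  constructor
  · rw [h1]
    module
  · rw [map_sub, hLeib, h1, h2]
    module
end

section
/- Let p be a prime, q = 4 if p = 2 and q = p otherwise, and K a field complete with respect to a nonarchimedean absolute value |·|, equipped with an isometric field embedding of Q_p (absolute value normalized by |p| = 1/p). Let T denote the torsion subgroup of Z_p^×. Then the map sending a continuous group homomorphism χ : Z_p^× → K^× to the pair (χ|_T, χ(1+q)) is a bijection from the set of continuous group homomorphisms Z_p^× → K^× onto the set of pairs (ω, u) where ω : T → K^× is a group homomorphism and u ∈ K satisfies |u − 1| < 1. -/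
/-!
Write `q = p ^ v`. When `(p - 1) v ≥ 2`, the binomial series `s ↦ (1 + q) ^ s` is a continuous
homomorphism `ℤ_p → ℤ_pˣ` with `|(1 + q) ^ s - 1 - s q| ≤ |s| |q| / p`, by Legendre's bound on
`v_p(n!)`. Hence `|(1 + q) ^ s - 1| = |s| |q|`, so it is injective, and by successive approximation
and compactness its image is `1 + q ℤ_p`. For `q = p` (`p` odd) and `q = 4` (`p = 2`), every unit
is a `φ(q)`-th root of unity times an element of `1 + q ℤ_p`, which makes
`T × ℤ_p → ℤ_pˣ, (t, s) ↦ t (1 + q) ^ s` a continuous bijection, hence a homeomorphism since the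
torsion subgroup `T` is finite. A continuous character is thus determined by its restriction to
`T` and its value at `1 + q`, and conversely `(t, s) ↦ ω(t) u ^ s` is one, `u ^ s` being the
binomial series in `K`. Finally `|χ(1 + q) - 1| < 1` because `χ(1 + q) ^ (p ^ n) → 1`, whereas
`|d - 1| ≥ 1` forces `|d ^ p - 1| = |d - 1| ^ p`.
-/

open Filter Topology

namespace PadicInt

variable {p : ℕ} [Fact p.Prime]

section BinomialSeries

variable {L : Type*} [NormedCommRing L] {j : ℤ_[p] →+* L} {u : L}

noncomputable def binomialSeries (j : ℤ_[p] →+* L) (u : L) (s : ℤ_[p]) : L :=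
  ∑' n : ℕ, j (Ring.choose s n) * (u - 1) ^ n

lemma binomialSeries_natCast (j : ℤ_[p] →+* L) (u : L) (n : ℕ) :
    binomialSeries j u n = u ^ n := by
  have h_vanish : ∀ k ∉ Finset.range (n + 1), j (Ring.choose (n : ℤ_[p]) k) * (u - 1) ^ k = 0 := by
    intro k hk
    rw [Ring.choose_natCast, Nat.choose_eq_zero_of_lt (by simpa using hk)]
    simp
  rw [binomialSeries, tsum_eq_sum h_vanish]
  conv_rhs => rw [← sub_add_cancel u 1, add_pow]
  refine Finset.sum_congr rfl fun k _ => ?_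
  simp [Ring.choose_natCast, mul_comm]

lemma binomialSeries_zero (j : ℤ_[p] →+* L) (u : L) : binomialSeries j u 0 = 1 := by
  simpa using binomialSeries_natCast j u 0

variable [NormOneClass L]

lemma norm_binomialSeries_term_le (hj : ∀ x, ‖j x‖ ≤ ‖x‖) (s : ℤ_[p]) (n : ℕ) :
    ‖j (Ring.choose s n) * (u - 1) ^ n‖ ≤ ‖u - 1‖ ^ n :=
  calc _ ≤ ‖j (Ring.choose s n)‖ * ‖(u - 1) ^ n‖ := norm_mul_le _ _
    _ ≤ ‖(u - 1) ^ n‖ := mul_le_of_le_one_left (norm_nonneg _) ((hj _).trans (norm_le_one _))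
    _ ≤ ‖u - 1‖ ^ n := norm_pow_le _ n

variable [CompleteSpace L]

lemma summable_binomialSeries (hj : ∀ x, ‖j x‖ ≤ ‖x‖) (hu : ‖u - 1‖ < 1) (s : ℤ_[p]) :
    Summable fun n : ℕ => j (Ring.choose s n) * (u - 1) ^ n :=
  .of_norm_bounded (summable_geometric_of_lt_one (norm_nonneg _) hu)
    (norm_binomialSeries_term_le hj s)

lemma continuous_binomialSeries (hj : ∀ x, ‖j x‖ ≤ ‖x‖) (hu : ‖u - 1‖ < 1) :
    Continuous (binomialSeries j u) := by
  have hj_cont : Continuous j := AddMonoidHomClass.continuous_of_bound j 1 (by simpa using hj)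
  exact continuous_tsum (fun n => ((hj_cont.comp (continuous_choose n)).mul continuous_const))
    (summable_geometric_of_lt_one (norm_nonneg _) hu)
    (fun n s => norm_binomialSeries_term_le hj s n)

lemma binomialSeries_add (hj : ∀ x, ‖j x‖ ≤ ‖x‖) (hu : ‖u - 1‖ < 1) (s t : ℤ_[p]) :
    binomialSeries j u (s + t) = binomialSeries j u s * binomialSeries j u t := by
  have hc := continuous_binomialSeries hj hu
  have h_dense : DenseRange fun nm : ℕ × ℕ => ((nm.1 : ℤ_[p]), (nm.2 : ℤ_[p])) :=
    denseRange_natCast.prodMap denseRange_natCast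
  have h := h_dense.equalizer (hc.comp (continuous_fst.add continuous_snd))
    ((hc.comp continuous_fst).mul (hc.comp continuous_snd)) <| funext fun nm => by
      simp only [Function.comp_apply, Pi.add_apply, Pi.mul_apply]
      rw [← Nat.cast_add, binomialSeries_natCast, binomialSeries_natCast, binomialSeries_natCast,
        pow_add]
  exact congrFun h (s, t)

noncomputable def binomialPow (hj : ∀ x, ‖j x‖ ≤ ‖x‖) (hu : ‖u - 1‖ < 1) :
    Multiplicative ℤ_[p] →* Lˣ where
  toFun s :=
    { val := binomialSeries j u s.toAdd
      inv := binomialSeries j u (-s.toAdd)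
      val_inv := by rw [← binomialSeries_add hj hu, add_neg_cancel, binomialSeries_zero]
      inv_val := by rw [← binomialSeries_add hj hu, neg_add_cancel, binomialSeries_zero] }
  map_one' := Units.ext <| binomialSeries_zero j u
  map_mul' s t := Units.ext <| binomialSeries_add hj hu _ _

lemma coe_binomialPow (hj : ∀ x, ‖j x‖ ≤ ‖x‖) (hu : ‖u - 1‖ < 1) (s : Multiplicative ℤ_[p]) :
    (binomialPow hj hu s : L) = binomialSeries j u s.toAdd := rfl

lemma binomialPow_ofAdd_one (hj : ∀ x, ‖j x‖ ≤ ‖x‖) (hu : ‖u - 1‖ < 1) :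
    (binomialPow hj hu (.ofAdd 1) : L) = u := by
  rw [coe_binomialPow, toAdd_ofAdd, ← Nat.cast_one, binomialSeries_natCast, pow_one]

lemma continuous_binomialPow (hj : ∀ x, ‖j x‖ ≤ ‖x‖) (hu : ‖u - 1‖ < 1) :
    Continuous (binomialPow hj hu) :=
  Units.continuous_iff.mpr ⟨(continuous_binomialSeries hj hu).comp continuous_toAdd,
    (continuous_binomialSeries hj hu).comp (continuous_neg.comp continuous_toAdd)⟩

end BinomialSeries

section OnePlusPPow

lemma norm_natCast_eq_zpow_neg_padicValNat {n : ℕ} (hn : n ≠ 0) :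
    ‖(n : ℤ_[p])‖ = (p : ℝ) ^ (-(padicValNat p n : ℤ)) := by
  rw [norm_def, coe_natCast, Padic.norm_eq_zpow_neg_valuation (mod_cast hn),
    Padic.valuation_natCast]

lemma norm_choose_le (s : ℤ_[p]) {n : ℕ} (hn : n ≠ 0) :
    ‖Ring.choose s n‖ ≤ ‖s‖ * (p : ℝ) ^ (padicValNat p n.factorial : ℤ) := by
  have hp_pos : (0 : ℝ) < p := mod_cast (Fact.out : p.Prime).pos
  obtain ⟨m, rfl⟩ := Nat.exists_eq_succ_of_ne_zero hn
  -- `(m + 1)! * (s choose (m + 1)) = s (s - 1) ⋯ (s - m)`, a multiple of `s`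
  have h_desc : ((m + 1).factorial : ℤ_[p]) * Ring.choose s (m + 1) =
      s * (ascPochhammer ℤ_[p] m).eval (s - m) := by
    rw [← nsmul_eq_mul, ← Ring.descPochhammer_eq_factorial_smul_choose,
      Polynomial.descPochhammer_smeval_eq_ascPochhammer, Polynomial.ascPochhammer_smeval_eq_eval,
      ascPochhammer_succ_right, Polynomial.eval_mul,
      show s - ((m + 1 : ℕ) : ℤ_[p]) + 1 = s - m by push_cast; ring]
    simp only [Polynomial.eval_add, Polynomial.eval_X, Polynomial.eval_natCast, sub_add_cancel,
      mul_comm]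
  have h_le : ‖((m + 1).factorial : ℤ_[p])‖ * ‖Ring.choose s (m + 1)‖ ≤ ‖s‖ := by
    rw [← norm_mul, h_desc, norm_mul]
    exact mul_le_of_le_one_right (norm_nonneg _) (norm_le_one _)
  rwa [norm_natCast_eq_zpow_neg_padicValNat (Nat.factorial_ne_zero _), zpow_neg,
    ← div_eq_inv_mul, div_le_iff₀ (zpow_pos hp_pos _)] at h_le

lemma padicValNat_factorial_add_one_le {v n : ℕ} (hv : 2 ≤ (p - 1) * v) (hn : 2 ≤ n) :
    padicValNat p n.factorial + 1 ≤ v * (n - 1) := by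
  have h_legendre := sub_one_mul_padicValNat_factorial_lt_of_ne_zero p (n := n) (by omega)
  obtain ⟨m, rfl⟩ : ∃ m, n = m + 1 := ⟨n - 1, by omega⟩
  obtain ⟨c, hc⟩ : ∃ c, p = c + 1 :=
    ⟨p - 1, (Nat.succ_pred_eq_of_pos (Fact.out : p.Prime).pos).symm⟩
  subst hc
  simp only [add_tsub_cancel_right] at h_legendre hv ⊢
  nlinarith

lemma norm_choose_mul_pow_le {v n : ℕ} (hv : 2 ≤ (p - 1) * v) (hn : 2 ≤ n) (s : ℤ_[p]) :
    ‖Ring.choose s n * ((p : ℤ_[p]) ^ v) ^ n‖ ≤ ‖s‖ * (p : ℝ) ^ (-(v + 1 : ℤ)) := by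
  have hp_one : (1 : ℝ) ≤ p := mod_cast (Fact.out : p.Prime).one_lt.le
  have h_exp : (padicValNat p n.factorial : ℤ) + -((v * n : ℕ) : ℤ) ≤ -(v + 1 : ℤ) := by
    have h := padicValNat_factorial_add_one_le hv hn
    zify [show 1 ≤ n by omega] at h
    push_cast
    linarith
  calc ‖Ring.choose s n * ((p : ℤ_[p]) ^ v) ^ n‖
      = ‖Ring.choose s n‖ * (p : ℝ) ^ (-((v * n : ℕ) : ℤ)) := by
        rw [norm_mul, ← pow_mul, norm_p_pow]
    _ ≤ ‖s‖ * (p : ℝ) ^ (padicValNat p n.factorial : ℤ) * (p : ℝ) ^ (-((v * n : ℕ) : ℤ)) := by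
        gcongr
        exact norm_choose_le s (by omega)
    _ = ‖s‖ * (p : ℝ) ^ ((padicValNat p n.factorial : ℤ) + -((v * n : ℕ) : ℤ)) := by
        rw [mul_assoc, zpow_add₀ (by positivity)]
    _ ≤ ‖s‖ * (p : ℝ) ^ (-(v + 1 : ℤ)) := by gcongr

lemma norm_one_add_p_pow_sub_one_lt_one {v : ℕ} (hv : 2 ≤ (p - 1) * v) :
    ‖(1 + (p : ℤ_[p]) ^ v) - 1‖ < 1 := by
  have hv₀ : v ≠ 0 := by
    rintro rfl
    simp at hv
  rw [add_sub_cancel_left, norm_p_pow]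
  exact zpow_lt_one_of_neg₀ (mod_cast (Fact.out : p.Prime).one_lt) (by omega)

variable {v : ℕ} (hv : 2 ≤ (p - 1) * v)

noncomputable def onePlusPPow : Multiplicative ℤ_[p] →* ℤ_[p]ˣ :=
  binomialPow (j := RingHom.id ℤ_[p]) (u := 1 + (p : ℤ_[p]) ^ v) (fun _ => le_rfl)
    (norm_one_add_p_pow_sub_one_lt_one hv)

lemma coe_onePlusPPow (s : ℤ_[p]) :
    (onePlusPPow hv (.ofAdd s) : ℤ_[p]) =
      ∑' n : ℕ, Ring.choose s n * ((p : ℤ_[p]) ^ v) ^ n := by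
  simp [onePlusPPow, coe_binomialPow, binomialSeries]

lemma coe_onePlusPPow_ofAdd_one : (onePlusPPow hv (.ofAdd 1) : ℤ_[p]) = 1 + (p : ℤ_[p]) ^ v :=
  binomialPow_ofAdd_one _ _

lemma continuous_onePlusPPow : Continuous (onePlusPPow hv) :=
  continuous_binomialPow _ _

lemma norm_onePlusPPow_sub_one_sub_le (s : ℤ_[p]) :
    ‖(onePlusPPow hv (.ofAdd s) : ℤ_[p]) - 1 - s * (p : ℤ_[p]) ^ v‖ ≤
      ‖s‖ * (p : ℝ) ^ (-(v + 1 : ℤ)) := by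
  have h_summable : Summable fun n : ℕ => Ring.choose s n * ((p : ℤ_[p]) ^ v) ^ n := by
    simpa [binomialSeries] using summable_binomialSeries (j := RingHom.id ℤ_[p])
      (fun _ => le_rfl) (norm_one_add_p_pow_sub_one_lt_one hv) s
  rw [coe_onePlusPPow, ← h_summable.sum_add_tsum_nat_add 2]
  simp only [Finset.sum_range_succ, Finset.sum_range_zero, Ring.choose_zero_right,
    Ring.choose_one_right, pow_zero, pow_one, mul_one, zero_add]
  have hp_pos : (0 : ℝ) < p := mod_cast (Fact.out : p.Prime).pos
  rw [show ∀ a b c : ℤ_[p], a + b + c - a - b = c by intros; ring]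
  refine IsUltrametricDist.norm_tsum_le_of_forall_le_of_nonneg (by positivity) fun n => ?_
  exact norm_choose_mul_pow_le hv (by omega) s

lemma norm_onePlusPPow_sub_one (s : ℤ_[p]) :
    ‖(onePlusPPow hv (.ofAdd s) : ℤ_[p]) - 1‖ = ‖s‖ * (p : ℝ) ^ (-(v : ℤ)) := by
  rcases eq_or_ne s 0 with rfl | hs
  · simp
  have h_lin : ‖s * (p : ℤ_[p]) ^ v‖ = ‖s‖ * (p : ℝ) ^ (-(v : ℤ)) := by rw [norm_mul, norm_p_pow]
  have h_err : ‖(onePlusPPow hv (.ofAdd s) : ℤ_[p]) - 1 - s * (p : ℤ_[p]) ^ v‖ <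
      ‖s * (p : ℤ_[p]) ^ v‖ := by
    refine (norm_onePlusPPow_sub_one_sub_le hv s).trans_lt ?_
    rw [h_lin]
    exact mul_lt_mul_of_pos_left (zpow_lt_zpow_right₀ (mod_cast (Fact.out : p.Prime).one_lt)
      (by omega)) (norm_pos_iff.mpr hs)
  rw [← h_lin, ← sub_add_cancel (_ - 1) (s * _),
    IsUltrametricDist.norm_add_eq_max_of_norm_ne_norm h_err.ne, max_eq_right h_err.le]

lemma onePlusPPow_injective : Function.Injective (onePlusPPow hv) := by
  refine (injective_iff_map_eq_one _).mpr fun s hs => ?_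
  have h := norm_onePlusPPow_sub_one hv s.toAdd
  have hp_pos : (0 : ℝ) < p := mod_cast (Fact.out : p.Prime).pos
  rw [ofAdd_toAdd, hs, Units.val_one, sub_self, norm_zero, eq_comm,
    mul_eq_zero_iff_right (zpow_pos hp_pos _).ne', norm_eq_zero] at h
  exact toAdd_eq_zero.mp h

lemma exists_norm_sub_onePlusPPow_le {z : ℤ_[p]} {k : ℕ}
    (hz : ‖z - 1‖ ≤ (p : ℝ) ^ (-((v + k : ℕ) : ℤ))) :
    ∃ c : ℤ_[p], ‖z - onePlusPPow hv (.ofAdd c)‖ ≤ (p : ℝ) ^ (-((v + k + 1 : ℕ) : ℤ)) := by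
  have hp_pos : (0 : ℝ) < p := mod_cast (Fact.out : p.Prime).pos
  obtain ⟨w, hw⟩ := Ideal.mem_span_singleton.mp ((norm_le_pow_iff_mem_span_pow _ _).mp hz)
  refine ⟨p ^ k * w, ?_⟩
  have hc : ‖(p : ℤ_[p]) ^ k * w‖ ≤ (p : ℝ) ^ (-(k : ℤ)) := by
    rw [norm_mul, norm_p_pow]
    exact mul_le_of_le_one_right (by positivity) (norm_le_one w)
  calc ‖z - onePlusPPow hv (.ofAdd (p ^ k * w))‖
      = ‖(onePlusPPow hv (.ofAdd (p ^ k * w)) : ℤ_[p]) - 1 - p ^ k * w * (p : ℤ_[p]) ^ v‖ := by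
        rw [← norm_neg]
        congr 1
        linear_combination (-1 : ℤ_[p]) * hw
    _ ≤ ‖(p : ℤ_[p]) ^ k * w‖ * (p : ℝ) ^ (-(v + 1 : ℤ)) := norm_onePlusPPow_sub_one_sub_le hv _
    _ ≤ (p : ℝ) ^ (-(k : ℤ)) * (p : ℝ) ^ (-(v + 1 : ℤ)) := by gcongr
    _ = (p : ℝ) ^ (-((v + k + 1 : ℕ) : ℤ)) := by
        rw [← zpow_add₀ hp_pos.ne']
        push_cast
        ring_nf

lemma exists_norm_sub_onePlusPPow_le_of_norm_sub_one_le {x : ℤ_[p]ˣ}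
    (hx : ‖(x : ℤ_[p]) - 1‖ ≤ (p : ℝ) ^ (-(v : ℤ))) (k : ℕ) :
    ∃ s, ‖(x : ℤ_[p]) - onePlusPPow hv s‖ ≤ (p : ℝ) ^ (-((v + k : ℕ) : ℤ)) := by
  induction k with
  | zero => exact ⟨1, by simpa using hx⟩
  | succ k ih =>
    obtain ⟨s, hs⟩ := ih
    set y := onePlusPPow hv s
    have hx_eq : (x : ℤ_[p]) = y * (x * y⁻¹ : ℤ_[p]ˣ) := by
      rw [← Units.val_mul, mul_comm x, mul_inv_cancel_left]
    obtain ⟨c, hc⟩ := exists_norm_sub_onePlusPPow_le hv (z := (x * y⁻¹ : ℤ_[p]ˣ)) (k := k) <| by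
      rwa [hx_eq, ← mul_one (y : ℤ_[p]), mul_assoc, one_mul, ← mul_sub, norm_mul, norm_units,
        one_mul] at hs
    refine ⟨s * .ofAdd c, ?_⟩
    rwa [map_mul, Units.val_mul, hx_eq, ← mul_sub, norm_mul, norm_units, one_mul]

lemma mem_range_onePlusPPow {x : ℤ_[p]ˣ} (hx : ‖(x : ℤ_[p]) - 1‖ ≤ (p : ℝ) ^ (-(v : ℤ))) :
    x ∈ Set.range (onePlusPPow hv) := by
  have hp_one : (1 : ℝ) < p := mod_cast (Fact.out : p.Prime).one_lt
  have h_closed : IsClosed (Set.range fun s => (onePlusPPow hv s : ℤ_[p])) :=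
    (isCompact_range (Units.continuous_val.comp (continuous_onePlusPPow hv))).isClosed
  suffices h : (x : ℤ_[p]) ∈ closure (Set.range fun s => (onePlusPPow hv s : ℤ_[p])) by
    obtain ⟨s, hs⟩ := h_closed.closure_subset h
    exact ⟨s, Units.ext hs⟩
  refine Metric.mem_closure_iff.mpr fun ε hε => ?_
  obtain ⟨k, hk⟩ := exists_pow_lt_of_lt_one hε (inv_lt_one_of_one_lt₀ hp_one)
  obtain ⟨s, hs⟩ := exists_norm_sub_onePlusPPow_le_of_norm_sub_one_le hv hx k
  refine ⟨_, ⟨s, rfl⟩, ?_⟩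
  calc dist (x : ℤ_[p]) (onePlusPPow hv s) ≤ (p : ℝ) ^ (-((v + k : ℕ) : ℤ)) := by
        rwa [dist_eq_norm]
    _ ≤ (p : ℝ) ^ (-(k : ℤ)) := zpow_le_zpow_right₀ hp_one.le (by omega)
    _ = (p : ℝ)⁻¹ ^ k := by rw [zpow_neg, zpow_natCast, inv_pow]
    _ < ε := hk

lemma eq_one_of_isOfFinOrder_onePlusPPow {s : Multiplicative ℤ_[p]}
    (hs : IsOfFinOrder (onePlusPPow hv s)) : s = 1 :=
  (isOfFinOrder_iff_eq_one s).mp ((onePlusPPow_injective hv).isOfFinOrder_iff.mp hs)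

end OnePlusPPow

section Decomposition

lemma norm_sub_one_le_iff_toZModPow_eq_one (x : ℤ_[p]) (n : ℕ) :
    ‖x - 1‖ ≤ (p : ℝ) ^ (-(n : ℤ)) ↔ toZModPow n x = 1 := by
  rw [norm_le_pow_iff_mem_span_pow, ← ker_toZModPow, RingHom.mem_ker, map_sub, map_one, sub_eq_zero]

lemma toZModPow_pow_totient (x : ℤ_[p]ˣ) (n : ℕ) :
    toZModPow n ((x : ℤ_[p]) ^ (p ^ n).totient) = 1 := by
  rw [map_pow]
  exact congrArg Units.val (ZMod.pow_totient (Units.map (toZModPow n).toMonoidHom x))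

variable {v : ℕ} (hv : 2 ≤ (p - 1) * v)

lemma exists_pow_totient_eq_one_mul_onePlusPPow_of_eq_one (hv₁ : v = 1)
    (x : ℤ_[p]ˣ) : ∃ t : ℤ_[p]ˣ, t ^ (p ^ v).totient = 1 ∧ ∃ s, x = t * onePlusPPow hv s := by
  subst hv₁
  obtain ⟨s₀, hs₀⟩ := mem_range_onePlusPPow hv (x := x ^ (p ^ 1).totient) <| by
    rw [norm_sub_one_le_iff_toZModPow_eq_one, Units.val_pow_eq_pow_val]
    exact toZModPow_pow_totient x 1
  -- `φ(p) = p - 1` is a unit of `ℤ_[p]`, so `s₀` can be divided by it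
  have h_unit : IsUnit (((p ^ 1).totient : ℕ) : ℤ_[p]) := by
    rw [pow_one, Nat.totient_prime (Fact.out : p.Prime), isUnit_iff, norm_natCast_eq_one_iff,
      Nat.coprime_self_sub_right (Fact.out : p.Prime).one_le]
    exact Nat.coprime_one_right p
  set s : Multiplicative ℤ_[p] := .ofAdd (h_unit.unit⁻¹ * s₀.toAdd)
  refine ⟨x * (onePlusPPow hv s)⁻¹, ?_, s, by group⟩
  rw [mul_pow, inv_pow, ← map_pow, ← hs₀, mul_inv_eq_one]
  congr 1
  rw [← ofAdd_toAdd s₀, ← ofAdd_nsmul, nsmul_eq_mul, ← mul_assoc, h_unit.mul_val_inv, one_mul]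

lemma exists_pow_totient_eq_one_mul_onePlusPPow_of_eq_two (hp : p = 2) (hv₂ : v = 2)
    (x : ℤ_[p]ˣ) : ∃ t : ℤ_[p]ˣ, t ^ (p ^ v).totient = 1 ∧ ∃ s, x = t * onePlusPPow hv s := by
  subst hp hv₂
  have h_units : ∀ a : (ZMod (2 ^ 2))ˣ, a = 1 ∨ a = -1 := by decide
  obtain ⟨ε, hε, hεx⟩ : ∃ ε : ℤ_[2]ˣ, ε ^ 2 = 1 ∧ toZModPow 2 ((ε * x : ℤ_[2]ˣ) : ℤ_[2]) = 1 := by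
    rcases h_units (Units.map (toZModPow 2).toMonoidHom x) with h | h
    · exact ⟨1, one_pow _, by simpa using congrArg Units.val h⟩
    · refine ⟨-1, by simp, ?_⟩
      simpa using congrArg (fun a : (ZMod (2 ^ 2))ˣ => -(a : ZMod (2 ^ 2))) h
  obtain ⟨s, hs⟩ := mem_range_onePlusPPow hv ((norm_sub_one_le_iff_toZModPow_eq_one _ 2).mpr hεx)
  refine ⟨ε, by rwa [show Nat.totient (2 ^ 2) = 2 by decide], s, ?_⟩
  rw [hs, ← mul_assoc, ← sq, hε, one_mul]

lemma exists_pow_totient_eq_one_mul_onePlusPPow (hv₂ : v = if p = 2 then 2 else 1)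
    (x : ℤ_[p]ˣ) : ∃ t : ℤ_[p]ˣ, t ^ (p ^ v).totient = 1 ∧ ∃ s, x = t * onePlusPPow hv s := by
  split_ifs at hv₂ with hp
  · exact exists_pow_totient_eq_one_mul_onePlusPPow_of_eq_two hv hp hv₂ x
  · exact exists_pow_totient_eq_one_mul_onePlusPPow_of_eq_one hv hv₂ x

lemma two_le_sub_one_mul_ite : 2 ≤ (p - 1) * (if p = 2 then 2 else 1) := by
  have := (Fact.out : p.Prime).two_le
  split_ifs with hp
  · subst hp; norm_num
  · omega

lemma mem_torsion_of_pow_totient_eq_one {t : ℤ_[p]ˣ} (ht : t ^ (p ^ v).totient = 1) :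
    t ∈ CommGroup.torsion ℤ_[p]ˣ :=
  isOfFinOrder_iff_pow_eq_one.mpr
    ⟨_, Nat.totient_pos.mpr (pow_pos (Fact.out : p.Prime).pos v), ht⟩

lemma torsion_le_rootsOfUnity (hv : 2 ≤ (p - 1) * v) (hv₂ : v = if p = 2 then 2 else 1) :
    CommGroup.torsion ℤ_[p]ˣ ≤ rootsOfUnity (p ^ v).totient ℤ_[p] := by
  intro x hx
  obtain ⟨t, ht, s, rfl⟩ := exists_pow_totient_eq_one_mul_onePlusPPow hv hv₂ x
  have hs : s = 1 := eq_one_of_isOfFinOrder_onePlusPPow hv <| by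
    rw [← inv_mul_cancel_left t (onePlusPPow hv s)]
    exact (CommGroup.torsion ℤ_[p]ˣ).mul_mem (inv_mem (mem_torsion_of_pow_totient_eq_one ht)) hx
  rw [mem_rootsOfUnity, hs, map_one, mul_one, ht]

instance : Finite (CommGroup.torsion ℤ_[p]ˣ) :=
  Finite.of_injective _ <| Subgroup.inclusion_injective <|
    torsion_le_rootsOfUnity two_le_sub_one_mul_ite rfl

noncomputable def torsionMulOnePlusPPow :
    CommGroup.torsion ℤ_[p]ˣ × Multiplicative ℤ_[p] →* ℤ_[p]ˣ :=
  (CommGroup.torsion ℤ_[p]ˣ).subtype.coprod (onePlusPPow hv)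

lemma continuous_torsionMulOnePlusPPow : Continuous (torsionMulOnePlusPPow hv) :=
  (continuous_subtype_val.comp continuous_fst).mul ((continuous_onePlusPPow hv).comp continuous_snd)

lemma torsionMulOnePlusPPow_bijective (hv₂ : v = if p = 2 then 2 else 1) :
    Function.Bijective (torsionMulOnePlusPPow hv) := by
  refine ⟨(injective_iff_map_eq_one _).mpr ?_, fun x => ?_⟩
  · rintro ⟨t, s⟩ h
    have h' : onePlusPPow hv s = (t : ℤ_[p]ˣ)⁻¹ := eq_inv_of_mul_eq_one_right h
    have hs : s = 1 := eq_one_of_isOfFinOrder_onePlusPPow hv <| by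
      rw [h']
      exact inv_mem t.2
    subst hs
    rw [map_one, eq_comm, inv_eq_one] at h'
    exact Prod.ext (Subtype.ext h') rfl
  · obtain ⟨t, ht, s, rfl⟩ := exists_pow_totient_eq_one_mul_onePlusPPow hv hv₂ x
    exact ⟨(⟨t, mem_torsion_of_pow_totient_eq_one ht⟩, s), rfl⟩

noncomputable def torsionMulOnePlusPPowEquiv (hv₂ : v = if p = 2 then 2 else 1) :
    CommGroup.torsion ℤ_[p]ˣ × Multiplicative ℤ_[p] ≃* ℤ_[p]ˣ :=
  MulEquiv.ofBijective _ (torsionMulOnePlusPPow_bijective hv hv₂)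

lemma continuous_torsionMulOnePlusPPowEquiv_symm (hv₂ : v = if p = 2 then 2 else 1) :
    Continuous (torsionMulOnePlusPPowEquiv hv hv₂).symm :=
  (continuous_torsionMulOnePlusPPow hv).continuous_symm_of_equiv_compact_to_t2
    (f := (torsionMulOnePlusPPowEquiv hv hv₂).toEquiv)

end Decomposition

section ContinuousHom

variable {M : Type*} [Monoid M]

lemma map_ofAdd_natCast (f : Multiplicative ℤ_[p] →* M) (n : ℕ) :
    f (.ofAdd n) = f (.ofAdd 1) ^ n := by
  rw [← map_pow, ← ofAdd_nsmul, nsmul_one]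

variable [TopologicalSpace M]

lemma ext_of_continuous [T2Space M] {f g : Multiplicative ℤ_[p] →* M} (hf : Continuous f)
    (hg : Continuous g) (h : f (.ofAdd 1) = g (.ofAdd 1)) : f = g := by
  have h_eq := denseRange_natCast.equalizer (hf.comp continuous_ofAdd) (hg.comp continuous_ofAdd)
    (funext fun n => by simp only [Function.comp_apply, map_ofAdd_natCast, h])
  exact MonoidHom.ext fun s => congrFun h_eq s.toAdd

lemma tendsto_pow_prime_pow {f : Multiplicative ℤ_[p] →* M} (hf : Continuous f) :
    Tendsto (fun n : ℕ => f (.ofAdd 1) ^ p ^ n) atTop (𝓝 1) := by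
  have h_pow : Tendsto (fun n : ℕ => (p : ℤ_[p]) ^ n) atTop (𝓝 0) :=
    tendsto_pow_atTop_nhds_zero_of_norm_lt_one <| by
      rw [norm_p]
      exact inv_lt_one_of_one_lt₀ (mod_cast (Fact.out : p.Prime).one_lt)
  have h := ((hf.comp continuous_ofAdd).tendsto 0).comp h_pow
  simpa only [Function.comp_def, ← Nat.cast_pow, map_ofAdd_natCast, ofAdd_zero, map_one] using h

lemma eq_of_continuous_of_eq_on_torsion {G : Type*} [CommGroup G] [TopologicalSpace G]
    [T2Space G] {v : ℕ} (hv : 2 ≤ (p - 1) * v) (hv₂ : v = if p = 2 then 2 else 1)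
    {χ χ' : ℤ_[p]ˣ →* G} (hχ : Continuous χ) (hχ' : Continuous χ')
    (h_torsion : χ.comp (CommGroup.torsion ℤ_[p]ˣ).subtype =
      χ'.comp (CommGroup.torsion ℤ_[p]ˣ).subtype)
    (h_gen : χ (onePlusPPow hv (.ofAdd 1)) = χ' (onePlusPPow hv (.ofAdd 1))) : χ = χ' := by
  rw [← MonoidHom.cancel_right (torsionMulOnePlusPPow_bijective hv hv₂).2, torsionMulOnePlusPPow,
    MonoidHom.comp_coprod, MonoidHom.comp_coprod, h_torsion]
  congr 1
  exact ext_of_continuous (hχ.comp (continuous_onePlusPPow hv))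
    (hχ'.comp (continuous_onePlusPPow hv)) h_gen

end ContinuousHom

section UltrametricField

variable {K : Type*} [NormedField K] [IsUltrametricDist K]

lemma norm_pow_sub_one_of_one_le_norm_sub_one (hp : ‖(p : K)‖ < 1) {d : K}
    (hd : 1 ≤ ‖d - 1‖) : ‖d ^ p - 1‖ = ‖d - 1‖ ^ p := by
  have hp_prime : p.Prime := Fact.out
  have h_expand : d ^ p - 1 = (d - 1) ^ p +
      ∑ k ∈ Finset.Ico 1 p, (d - 1) ^ k * (p.choose k : K) := by
    conv_lhs => rw [← sub_add_cancel d 1, add_pow, Finset.sum_range_succ,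
      Finset.sum_range_eq_add_Ico _ hp_prime.pos]
    simp only [one_pow, mul_one, pow_zero, Nat.choose_zero_right, Nat.cast_one, Nat.choose_self]
    ring
  have h_middle : ‖∑ k ∈ Finset.Ico 1 p, (d - 1) ^ k * (p.choose k : K)‖ < ‖(d - 1) ^ p‖ := by
    refine lt_of_le_of_lt (IsUltrametricDist.norm_sum_le_of_forall_le_of_nonneg
      (C := ‖d - 1‖ ^ (p - 1) * ‖(p : K)‖) (by positivity) fun k hk => ?_) ?_
    · obtain ⟨hk₁, hk₂⟩ := Finset.mem_Ico.mp hk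
      obtain ⟨t, ht⟩ := hp_prime.dvd_choose_self (by omega) hk₂
      rw [norm_mul, norm_pow, ht, Nat.cast_mul, norm_mul]
      exact mul_le_mul (pow_le_pow_right₀ hd (by omega))
        (mul_le_of_le_one_right (norm_nonneg _) (IsUltrametricDist.norm_natCast_le_one K t))
        (by positivity) (by positivity)
    · rw [norm_pow]
      calc ‖d - 1‖ ^ (p - 1) * ‖(p : K)‖ < ‖d - 1‖ ^ (p - 1) := by
            apply mul_lt_of_lt_one_right (by positivity) hp
        _ ≤ ‖d - 1‖ ^ p := pow_le_pow_right₀ hd (by omega)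
  rw [h_expand, IsUltrametricDist.norm_add_eq_max_of_norm_ne_norm h_middle.ne',
    max_eq_left h_middle.le, norm_pow]

lemma norm_sub_one_lt_one_of_tendsto_pow (hp : ‖(p : K)‖ < 1) {c : K}
    (hc : Tendsto (fun n : ℕ => c ^ p ^ n) atTop (𝓝 1)) : ‖c - 1‖ < 1 := by
  by_contra! hc_far
  have h_far : ∀ n : ℕ, 1 ≤ ‖c ^ p ^ n - 1‖ := by
    intro n
    induction n with
    | zero => simpa using hc_far
    | succ n ih =>
      rw [pow_succ, pow_mul, norm_pow_sub_one_of_one_le_norm_sub_one hp ih]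
      exact one_le_pow₀ ih
  obtain ⟨n, hn⟩ := ((Metric.tendsto_nhds.mp hc) 1 one_pos).exists
  exact (h_far n).not_gt (by rwa [dist_eq_norm] at hn)

end UltrametricField

section Characters

variable {K : Type*} [NormedField K] {ι : ℚ_[p] →+* K} (hι : ∀ x, ‖ι x‖ = ‖x‖)
  {v : ℕ} (hv : 2 ≤ (p - 1) * v)

include hι in
lemma norm_natCast_lt_one_of_isometry : ‖(p : K)‖ < 1 := by
  rw [← map_natCast ι, hι]
  exact Padic.norm_p_lt_one

include hι in
lemma exists_continuous_of_norm_sub_one_lt_one [CompleteSpace K]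
    (hv₂ : v = if p = 2 then 2 else 1) (ω : CommGroup.torsion ℤ_[p]ˣ →* Kˣ) {u : K}
    (hu : ‖u - 1‖ < 1) : ∃ χ : ℤ_[p]ˣ →* Kˣ, Continuous χ ∧
      χ.comp (CommGroup.torsion ℤ_[p]ˣ).subtype = ω ∧ (χ (onePlusPPow hv (.ofAdd 1)) : K) = u := by
  set e := torsionMulOnePlusPPowEquiv hv hv₂
  have hj : ∀ x : ℤ_[p], ‖(ι.comp Coe.ringHom) x‖ ≤ ‖x‖ := fun x => (hι x).le
  refine ⟨(ω.coprod (binomialPow hj hu)).comp e.symm.toMonoidHom, ?_, ?_, ?_⟩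
  · exact ((continuous_of_discreteTopology.comp continuous_fst).mul
      ((continuous_binomialPow hj hu).comp continuous_snd)).comp
      (continuous_torsionMulOnePlusPPowEquiv_symm hv hv₂)
  · ext t
    have he : e.symm t = (t, 1) :=
      e.symm_apply_eq.mpr (by simp [e, torsionMulOnePlusPPowEquiv, torsionMulOnePlusPPow])
    simp [he]
  · have he : e.symm (onePlusPPow hv (.ofAdd 1)) = (1, .ofAdd 1) :=
      e.symm_apply_eq.mpr (by simp [e, torsionMulOnePlusPPowEquiv, torsionMulOnePlusPPow])
    simp [he, binomialPow_ofAdd_one]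

include hι in
lemma norm_sub_one_lt_one_of_continuous [IsUltrametricDist K] {χ : ℤ_[p]ˣ →* Kˣ}
    (hχ : Continuous χ) : ‖(χ (onePlusPPow hv (.ofAdd 1)) : K) - 1‖ < 1 := by
  refine norm_sub_one_lt_one_of_tendsto_pow (norm_natCast_lt_one_of_isometry hι) ?_
  have h := tendsto_pow_prime_pow (f := χ.comp (onePlusPPow hv))
    (hχ.comp (continuous_onePlusPPow hv))
  simpa [Function.comp_def] using (Units.continuous_val.tendsto 1).comp h

end Characters

end PadicInt

/-- The weight space on `K`-points: `χ ↦ (χ|_T, χ(1+q))` is a bijection from the set of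
continuous group homomorphisms `ℤ_p^× → K^×` onto the set of pairs `(ω, u)` with
`ω : T → K^×` a group homomorphism (`T` the torsion subgroup of `ℤ_p^×`) and
`u ∈ K` with `‖u - 1‖ < 1`. -/
theorem weight_space_bijection (p : ℕ) [Fact p.Prime]
    (q : ℕ) (hq : q = if p = 2 then 4 else p)
    {K : Type*} [NormedField K] [CompleteSpace K] [IsUltrametricDist K]
    (ι : ℚ_[p] →+* K) (hι : ∀ x, ‖ι x‖ = ‖x‖)
    (u₀ : ℤ_[p]ˣ) (hu₀ : (u₀ : ℤ_[p]) = 1 + q) :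
    Set.BijOn
      (fun χ : ℤ_[p]ˣ →* Kˣ =>
        ((χ.comp (CommGroup.torsion ℤ_[p]ˣ).subtype, ((χ u₀ : Kˣ) : K)) :
          ((CommGroup.torsion ℤ_[p]ˣ) →* Kˣ) × K))
      {χ : ℤ_[p]ˣ →* Kˣ | Continuous χ}
      {y : ((CommGroup.torsion ℤ_[p]ˣ) →* Kˣ) × K | ‖y.2 - 1‖ < 1} := by
  have hv := PadicInt.two_le_sub_one_mul_ite (p := p)
  have h_gen : PadicInt.onePlusPPow hv (.ofAdd 1) = u₀ := by
    refine Units.ext ?_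
    rw [PadicInt.coe_onePlusPPow_ofAdd_one, hu₀, hq]
    split_ifs with hp
    · subst hp
      norm_num
    · simp
  subst h_gen
  refine ⟨fun χ hχ => PadicInt.norm_sub_one_lt_one_of_continuous hι hv hχ,
    fun χ hχ χ' hχ' h => ?_, fun ⟨ω, u⟩ hu => ?_⟩
  · exact PadicInt.eq_of_continuous_of_eq_on_torsion hv rfl hχ hχ' (congrArg Prod.fst h)
      (Units.ext (congrArg Prod.snd h))
  · obtain ⟨χ, hχ, hω, hχu⟩ := PadicInt.exists_continuous_of_norm_sub_one_lt_one hι hv rfl ω hu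
    exact ⟨χ, hχ, Prod.ext hω hχu⟩
end

section
/- Let p be a prime and K a field complete with respect to a nonarchimedean absolute value |·|, equipped with an isometric field embedding of Q_p (absolute value normalized by |p| = 1/p). Let k ∈ ℤ and let ε : Z_p^× → K^× be a continuous group homomorphism with finite image, and define χ : Z_p^× → K^× by χ(a) = ε(a)·a^k. Then the function a ↦ ℓ(χ(a))/ℓ(a) is defined for all a ≠ 1 in a sufficiently small neighborhood of 1 in Z_p^×, and it tends to k as a → 1 (limit along the punctured neighborhood filter of 1 in Z_p^×); here ℓ(u) = Σ_{m≥1}(−1)^{m+1}(u−1)^m/m is the p-adic logarithm series. -/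
open Filter Topology

/-!
For `u` close to `1` the logarithm series is `u - 1` up to an error `O(‖u - 1‖²)`: its `m`-th
term has norm at most `m ‖u - 1‖ ^ m` because `‖m‖⁻¹ ≤ m` in `ℚ_p`. In an ultrametric field
`‖u‖ = 1` also gives `u ^ k - 1 = k (u - 1) + O(‖u - 1‖²)` for every `k : ℤ`. Hence
`ℓ(u ^ k) = k ℓ(u) + O(‖u - 1‖²)` while `‖ℓ(u)‖ = ‖u - 1‖`, so `ℓ(u ^ k) / ℓ(u) → k` as `u → 1`.
Finally `ε`, being continuous with finite image, is trivial near `1`, and `a ↦ ι a` maps a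
punctured neighbourhood of `1` in `ℤ_p^×` into one of `1` in `K`.
-/

lemma ContinuousAt.eventually_eq_of_finite_range {X Y : Type*} [TopologicalSpace X]
    [TopologicalSpace Y] [T1Space Y] {f : X → Y} {x : X} (hf : ContinuousAt f x)
    (hfin : (Set.range f).Finite) : ∀ᶠ y in 𝓝 x, f y = f x := by
  have hnhds : (Set.range f \ {f x})ᶜ ∈ 𝓝 (f x) :=
    (hfin.sdiff.isClosed.isOpen_compl).mem_nhds fun h => h.2 rfl
  filter_upwards [hf.preimage_mem_nhds hnhds] with y hy
  by_contra hne
  exact hy ⟨Set.mem_range_self y, hne⟩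

lemma ContinuousAt.tendsto_nhdsNE_of_injective {X Y : Type*} [TopologicalSpace X]
    [TopologicalSpace Y] {f : X → Y} {x : X} (hf : ContinuousAt f x) (hinj : f.Injective) :
    Tendsto f (𝓝[≠] x) (𝓝[≠] f x) :=
  hf.continuousWithinAt.tendsto_nhdsWithin fun _ hy => hinj.ne hy

lemma Padic.norm_natCast_inv_le (p : ℕ) [Fact p.Prime] (n : ℕ) : ‖(n : ℚ_[p])‖⁻¹ ≤ n := by
  rcases Nat.eq_zero_or_pos n with rfl | hn
  · simp
  rw [Padic.norm_eq_zpow_neg_valuation (Nat.cast_ne_zero.2 hn.ne'), Padic.valuation_natCast,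
    zpow_neg, inv_inv, zpow_natCast]
  exact_mod_cast Nat.le_of_dvd hn pow_padicValNat_dvd

-- The terms of `ℓ(u) = ∑_{m ≥ 1} (-1) ^ (m + 1) (u - 1) ^ m / m`, reindexed to start at `0`.
def logSeriesTerm {K : Type*} [Field K] (u : K) (m : ℕ) : K :=
  (-1) ^ m * (u - 1) ^ (m + 1) / ((m + 1 : ℕ) : K)

namespace IsUltrametricDist

lemma norm_eq_of_norm_sub_lt_right {E : Type*} [SeminormedAddGroup E] [IsUltrametricDist E]
    {x y : E} (h : ‖x - y‖ < ‖y‖) : ‖x‖ = ‖y‖ := by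
  simpa [max_eq_right h.le] using norm_add_eq_max_of_norm_ne_norm h.ne

lemma norm_sub_le_max {E : Type*} [SeminormedAddGroup E] [IsUltrametricDist E] (x y : E) :
    ‖x - y‖ ≤ max ‖x‖ ‖y‖ := by
  simpa [sub_eq_add_neg] using norm_add_le_max x (-y)

variable {K : Type*} [NormedField K] [IsUltrametricDist K]

lemma norm_zpow_sub_one_le {u : K} (hu : ‖u‖ = 1) (k : ℤ) : ‖u ^ k - 1‖ ≤ ‖u - 1‖ := by
  have hu0 : u ≠ 0 := norm_ne_zero_iff.1 (by simp [hu])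
  have hmul : ∀ j : ℤ, ‖u ^ j * (u - 1)‖ = ‖u - 1‖ := fun j => by simp [norm_zpow, hu]
  induction k using Int.induction_on with
  | zero => simp
  | succ i ih =>
    rw [show u ^ ((i : ℤ) + 1) - 1 = u ^ (i : ℤ) * (u - 1) + (u ^ (i : ℤ) - 1) by
      rw [zpow_add_one₀ hu0]; ring]
    exact (norm_add_le_max _ _).trans (max_le (hmul _).le ih)
  | pred i ih =>
    rw [show u ^ (-(i : ℤ) - 1) - 1 = (u ^ (-(i : ℤ)) - 1) - u ^ (-(i : ℤ) - 1) * (u - 1) by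
      rw [show u ^ (-(i : ℤ)) = u ^ (-(i : ℤ) - 1) * u by rw [← zpow_add_one₀ hu0, sub_add_cancel]]
      ring]
    exact (norm_sub_le_max _ _).trans (max_le ih (hmul _).le)

lemma norm_zpow_sub_one_sub_mul_le {u : K} (hu : ‖u‖ = 1) (k : ℤ) :
    ‖u ^ k - 1 - k * (u - 1)‖ ≤ ‖u - 1‖ ^ 2 := by
  have hu0 : u ≠ 0 := norm_ne_zero_iff.1 (by simp [hu])
  have hmul : ∀ j : ℤ, ‖(u ^ j - 1) * (u - 1)‖ ≤ ‖u - 1‖ ^ 2 := fun j => by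
    rw [norm_mul, sq]
    exact mul_le_mul_of_nonneg_right (norm_zpow_sub_one_le hu j) (norm_nonneg _)
  induction k using Int.induction_on with
  | zero => simp
  | succ i ih =>
    rw [show u ^ ((i : ℤ) + 1) - 1 - ((i + 1 : ℤ) : K) * (u - 1)
        = (u ^ (i : ℤ) - 1 - (i : ℤ) * (u - 1)) + (u ^ (i : ℤ) - 1) * (u - 1) by
      rw [zpow_add_one₀ hu0]; push_cast; ring]
    exact (norm_add_le_max _ _).trans (max_le ih (hmul _))
  | pred i ih =>
    rw [show u ^ (-(i : ℤ) - 1) - 1 - ((-(i : ℤ) - 1 : ℤ) : K) * (u - 1)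
        = (u ^ (-(i : ℤ)) - 1 - (-(i : ℤ) : ℤ) * (u - 1)) - (u ^ (-(i : ℤ) - 1) - 1) * (u - 1) by
      rw [show u ^ (-(i : ℤ)) = u ^ (-(i : ℤ) - 1) * u by rw [← zpow_add_one₀ hu0, sub_add_cancel]]
      push_cast; ring]
    exact (norm_sub_le_max _ _).trans (max_le ih (hmul _))

lemma norm_sub_sub_one_le_of_hasSum_log (hK : ∀ n : ℕ, ‖(n : K)‖⁻¹ ≤ n) {u l : K}
    (hl : HasSum (logSeriesTerm u) l)
    (hu : ‖u - 1‖ ≤ 2⁻¹) : ‖l - (u - 1)‖ ≤ 2 * ‖u - 1‖ ^ 2 := by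
  set r := ‖u - 1‖
  have htail : HasSum (fun m => logSeriesTerm u (m + 1)) (l - (u - 1)) := by
    simpa [logSeriesTerm] using (hasSum_nat_add_iff' 1).2 hl
  rw [← htail.tsum_eq]
  refine norm_tsum_le_of_forall_le_of_nonneg (by positivity) fun m => ?_
  have hpow : r ^ m * ((m : ℝ) + 2) ≤ 2 := by
    have h2 : (m : ℝ) + 2 ≤ 2 * 2 ^ m := by
      exact_mod_cast (show m + 2 ≤ 2 * 2 ^ m by have := @Nat.lt_two_pow_self (m + 1); omega)
    calc r ^ m * ((m : ℝ) + 2) ≤ (2⁻¹) ^ m * (2 * 2 ^ m) := by gcongr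
      _ = 2 := by rw [inv_pow]; field_simp
  calc ‖logSeriesTerm u (m + 1)‖ = r ^ 2 * (r ^ m * ‖((m + 2 : ℕ) : K)‖⁻¹) := by
        rw [logSeriesTerm, norm_div, norm_mul, norm_pow, norm_pow, norm_neg, norm_one, one_pow,
          one_mul, div_eq_mul_inv]
        ring
    _ ≤ r ^ 2 * (r ^ m * ((m : ℝ) + 2)) := by
        gcongr
        exact_mod_cast hK (m + 2)
    _ ≤ 2 * r ^ 2 := (mul_le_mul_of_nonneg_left hpow (sq_nonneg r)).trans_eq (mul_comm _ _)

lemma norm_eq_norm_sub_one_of_hasSum_log (hK : ∀ n : ℕ, ‖(n : K)‖⁻¹ ≤ n) {u l : K}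
    (hl : HasSum (logSeriesTerm u) l)
    (hu₁ : u ≠ 1) (hu : ‖u - 1‖ < 2⁻¹) : ‖l‖ = ‖u - 1‖ := by
  have hr : 0 < ‖u - 1‖ := norm_pos_iff.2 (sub_ne_zero.2 hu₁)
  refine norm_eq_of_norm_sub_lt_right ((norm_sub_sub_one_le_of_hasSum_log hK hl hu.le).trans_lt ?_)
  nlinarith

lemma norm_log_zpow_div_log_sub_le (hK : ∀ n : ℕ, ‖(n : K)‖⁻¹ ≤ n) {L : K → K}
    (hL : ∀ u : K, ‖u - 1‖ < 1 → HasSum (logSeriesTerm u) (L u))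
    {u : K} (hu₁ : u ≠ 1) (hu : ‖u - 1‖ < 2⁻¹) (k : ℤ) :
    ‖L (u ^ k) / L u - k‖ ≤ 2 * ‖u - 1‖ := by
  set r := ‖u - 1‖
  have hr : 0 < r := norm_pos_iff.2 (sub_ne_zero.2 hu₁)
  have hu_norm : ‖u‖ = 1 := by
    simpa using norm_eq_of_norm_sub_lt_right (x := u) (y := 1) (by simp; linarith)
  have hlog : ∀ v : K, ‖v - 1‖ ≤ r → ‖L v - (v - 1)‖ ≤ 2 * r ^ 2 := fun v hv =>
    (norm_sub_sub_one_le_of_hasSum_log hK (hL v (by linarith)) (by linarith)).trans (by gcongr)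
  have hLu : ‖L u‖ = r := norm_eq_norm_sub_one_of_hasSum_log hK (hL u (by linarith)) hu₁ hu
  have hnum : ‖L (u ^ k) - k * L u‖ ≤ 2 * r ^ 2 := by
    rw [show L (u ^ k) - k * L u = (L (u ^ k) - (u ^ k - 1)) + (u ^ k - 1 - k * (u - 1))
      - k * (L u - (u - 1)) by ring]
    refine (norm_sub_le_max _ _).trans (max_le ((norm_add_le_max _ _).trans (max_le ?_ ?_)) ?_)
    · exact hlog _ (norm_zpow_sub_one_le hu_norm k)
    · exact (norm_zpow_sub_one_sub_mul_le hu_norm k).trans (by nlinarith)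
    · rw [norm_mul]
      exact (mul_le_of_le_one_left (norm_nonneg _) (norm_intCast_le_one K k)).trans (hlog u le_rfl)
  rw [div_sub' (norm_pos_iff.1 (hLu ▸ hr)), norm_div, hLu, div_le_iff₀ hr, mul_comm (L u)]
  linarith

lemma tendsto_log_zpow_div_log (hK : ∀ n : ℕ, ‖(n : K)‖⁻¹ ≤ n) {L : K → K}
    (hL : ∀ u : K, ‖u - 1‖ < 1 → HasSum (logSeriesTerm u) (L u))
    (k : ℤ) : Tendsto (fun u => L (u ^ k) / L u) (𝓝[≠] 1) (𝓝 (k : K)) := by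
  rw [← tendsto_sub_nhds_zero_iff]
  refine squeeze_zero_norm' ?_ (by
    simpa using ((tendsto_norm_sub_self (1 : K)).const_mul 2).mono_left nhdsWithin_le_nhds)
  filter_upwards [self_mem_nhdsWithin, nhdsWithin_le_nhds (eventually_norm_sub_lt (1 : K)
    (by norm_num : (0 : ℝ) < 2⁻¹))] with u hu₁ hu
  exact norm_log_zpow_div_log_sub_le hK hL hu₁ hu k

lemma eventually_log_ne_zero (hK : ∀ n : ℕ, ‖(n : K)‖⁻¹ ≤ n) {L : K → K}
    (hL : ∀ u : K, ‖u - 1‖ < 1 → HasSum (logSeriesTerm u) (L u)) :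
    ∀ᶠ u in 𝓝[≠] (1 : K), L u ≠ 0 := by
  filter_upwards [self_mem_nhdsWithin, nhdsWithin_le_nhds (eventually_norm_sub_lt (1 : K)
    (by norm_num : (0 : ℝ) < 2⁻¹))] with u hu₁ hu
  rw [← norm_ne_zero_iff, norm_eq_norm_sub_one_of_hasSum_log hK (hL u (by linarith)) hu₁ hu]
  exact norm_ne_zero_iff.2 (sub_ne_zero.2 hu₁)

end IsUltrametricDist

open IsUltrametricDist in
theorem weight_of_classical_character_general (p : ℕ) [Fact p.Prime]
    {K : Type*} [NormedField K] [IsUltrametricDist K]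
    (ι : ℚ_[p] →+* K) (hι : ∀ x, ‖ι x‖ = ‖x‖)
    (k : ℤ) (ε : ℤ_[p]ˣ →* Kˣ) (hεc : Continuous ε)
    (hεfin : (Set.range (ε : ℤ_[p]ˣ → Kˣ)).Finite)
    (L : K → K)
    (hL : ∀ u : K, ‖u - 1‖ < 1 →
      HasSum (fun m : ℕ => (-1) ^ m * (u - 1) ^ (m + 1) / ((m + 1 : ℕ) : K)) (L u)) :
    (∀ᶠ a in nhdsWithin (1 : ℤ_[p]ˣ) {1}ᶜ, L (ι ((a : ℤ_[p]) : ℚ_[p])) ≠ 0) ∧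
    Filter.Tendsto
      (fun a : ℤ_[p]ˣ =>
        L (((ε a : Kˣ) : K) * (ι ((a : ℤ_[p]) : ℚ_[p])) ^ k) / L (ι ((a : ℤ_[p]) : ℚ_[p])))
      (nhdsWithin (1 : ℤ_[p]ˣ) {1}ᶜ) (nhds ((k : ℤ) : K)) := by
  have hK : ∀ n : ℕ, ‖(n : K)‖⁻¹ ≤ n := fun n => by
    rw [← map_natCast ι, hι]
    exact Padic.norm_natCast_inv_le p n
  have hcoe : Tendsto (fun a : ℤ_[p] => ι (a : ℚ_[p])) (𝓝[≠] 1) (𝓝[≠] 1) := by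
    convert ContinuousAt.tendsto_nhdsNE_of_injective (x := 1)
      (f := fun a : ℤ_[p] => ι (a : ℚ_[p]))
      ((AddMonoidHomClass.isometry_of_norm ι hι).continuous.comp continuous_subtype_val).continuousAt
      (ι.injective.comp Subtype.val_injective) using 2 <;> rw [PadicInt.coe_one, map_one]
  have hval : Tendsto (Units.val : ℤ_[p]ˣ → ℤ_[p]) (𝓝[≠] 1) (𝓝[≠] 1) := by
    simpa using ContinuousAt.tendsto_nhdsNE_of_injective (x := (1 : ℤ_[p]ˣ))
      Units.continuous_val.continuousAt Units.val_injective
  have hε : ∀ᶠ a in 𝓝[≠] (1 : ℤ_[p]ˣ), ε a = 1 := by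
    have hlocal := hεc.continuousAt.eventually_eq_of_finite_range (x := 1) hεfin
    rw [map_one] at hlocal
    exact nhdsWithin_le_nhds hlocal
  refine ⟨by simpa using hcoe.eventually (eventually_log_ne_zero hK hL),
    ((tendsto_log_zpow_div_log hK hL k).comp (hcoe.comp hval)).congr' ?_⟩
  filter_upwards [hε] with a ha
  simp [ha]

/-- A classical character `χ = ε·χ_cycl^k` (with `ε` of finite order) has weight `k`:
the ratio `ℓ(χ(a))/ℓ(a)` is defined for `a ≠ 1` near `1` and tends to `k` as `a → 1`
in `ℤ_p^×`. Here `L` is the logarithm series on the open unit ball around `1` in `K`. -/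
theorem weight_of_classical_character (p : ℕ) [Fact p.Prime]
    {K : Type*} [NormedField K] [CompleteSpace K] [IsUltrametricDist K]
    (ι : ℚ_[p] →+* K) (hι : ∀ x, ‖ι x‖ = ‖x‖)
    (k : ℤ) (ε : ℤ_[p]ˣ →* Kˣ) (hεc : Continuous ε)
    (hεfin : (Set.range (ε : ℤ_[p]ˣ → Kˣ)).Finite)
    (L : K → K)
    (hL : ∀ u : K, ‖u - 1‖ < 1 →
      HasSum (fun m : ℕ => (-1) ^ m * (u - 1) ^ (m + 1) / ((m + 1 : ℕ) : K)) (L u)) :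
    (∀ᶠ a in nhdsWithin (1 : ℤ_[p]ˣ) {1}ᶜ, L (ι ((a : ℤ_[p]) : ℚ_[p])) ≠ 0) ∧
    Filter.Tendsto
      (fun a : ℤ_[p]ˣ =>
        L (((ε a : Kˣ) : K) * (ι ((a : ℤ_[p]) : ℚ_[p])) ^ k) / L (ι ((a : ℤ_[p]) : ℚ_[p])))
      (nhdsWithin (1 : ℤ_[p]ˣ) {1}ᶜ) (nhds ((k : ℤ) : K)) :=
  weight_of_classical_character_general p ι hι k ε hεc hεfin L hL
end
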